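/- arXiv:q-alg/9507014 — 2 statements merged into one kernel-verified Lean document; each statement's English description precedes it below -/
import Mathlib

section
/- Let n ≥ 2, 0 ≤ k ≤ n−1, m = (m_1,…,m_{n−1}) ∈ (ℤ_{≥0})^{n−1} with k + Σ_{t=1}^{n−1} t·m_t ≡ 0 (mod n), let r be an integer with 0 < r ≤ n, and let L ≥ 0 be an integer with L − 2k ≡ r (mod n). Then for every 1 ≤ i ≤ n−1: 2·Σ_{j=1}^{i−1} j·m_{i−j} − max(i−r,0) + i·⌊(L + n − i + max(i−r,0) − 2·Σ_{j=1}^{n−1} j·m_{n−j})/n⌋ = (C^{−1}(L·e_{n−1} + e_r − 2m))_i, where e_n := 0. In particular this quantity is an integer. -/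
/-- The entries of the inverse Cartan matrix of `sl(n)`:
`(C⁻¹)_{ij} = i(n-j)/n` for `i ≤ j` and `(C⁻¹)_{ij} = j(n-i)/n` for `i > j`. -/
def cinv (n i j : ℕ) : ℚ :=
  if i ≤ j then (i : ℚ) * ((n : ℚ) - (j : ℚ)) / (n : ℚ)
  else (j : ℚ) * ((n : ℚ) - (i : ℚ)) / (n : ℚ)

/-!
Writing `(C⁻¹)_{it} = i(n-t)/n - max(i-t, 0)`, the right-hand side becomes
`2 Σ_{t<i} (i-t) m_t - max(i-r, 0) + i·D/n` with `D = L + n - r - 2 Σ_t (n-t) m_t`.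
The congruences on `k` and `L` make `n ∣ D`, and the numerator inside the floor is
`D + max(r-i, 0)` with `0 ≤ max(r-i, 0) < n`, so the floor is exactly `D/n`.
-/

open Finset

theorem sum_Icc_natCast_mul_sub_reflect {R : Type*} [CommRing R] (N : ℕ) (g : ℕ → R) :
    ∑ j ∈ Icc 1 (N - 1), (j : R) * g (N - j) = ∑ t ∈ Icc 1 (N - 1), ((N : R) - t) * g t := by
  refine sum_nbij' (fun j => N - j) (fun t => N - t) ?_ ?_ ?_ ?_ ?_ <;> intro a ha <;>
    rw [mem_Icc] at ha
  · rw [mem_Icc]; omega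
  · rw [mem_Icc]; omega
  · omega
  · omega
  · rw [Nat.cast_sub (by omega : a ≤ N), sub_sub_cancel]

theorem cinv_eq_sub_max {n : ℕ} (hn : 0 < n) (i t : ℕ) :
    cinv n i t = (i : ℚ) * ((n : ℚ) - t) / n - ((max ((i : ℤ) - t) 0 : ℤ) : ℚ) := by
  unfold cinv
  split_ifs with hit
  · rw [max_eq_right (by omega)]
    simp
  · rw [max_eq_left (by omega)]
    push_cast
    field_simp
    ring

theorem cinv_self {n i : ℕ} (hi : i ≤ n) : cinv n i n = 0 := by
  simp [cinv, hi]

theorem cinv_pred_right {n i : ℕ} (hi : i ≤ n - 1) : cinv n i (n - 1) = (i : ℚ) / n := by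
  obtain rfl | hn := Nat.eq_zero_or_pos n
  · simp [cinv]
  rw [cinv, if_pos hi, Nat.cast_sub (by omega : 1 ≤ n)]
  ring

theorem sum_cinv_mul {n : ℕ} (hn : 0 < n) {i : ℕ} (hi : i ≤ n) (x : ℕ → ℚ) :
    ∑ t ∈ Icc 1 (n - 1), cinv n i t * x t
      = (i : ℚ) / n * ∑ t ∈ Icc 1 (n - 1), ((n : ℚ) - t) * x t
        - ∑ t ∈ Icc 1 (i - 1), ((i : ℚ) - t) * x t := by
  have hmax : ∑ t ∈ Icc 1 (n - 1), ((max ((i : ℤ) - t) 0 : ℤ) : ℚ) * x t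
      = ∑ t ∈ Icc 1 (i - 1), ((i : ℚ) - t) * x t := by
    rw [← sum_subset (Icc_subset_Icc_right (by omega : i - 1 ≤ n - 1))]
    · refine sum_congr rfl fun t ht => ?_
      rw [mem_Icc] at ht
      rw [max_eq_left (by omega : (0 : ℤ) ≤ i - t)]
      push_cast
      ring
    · intro t ht hti
      rw [mem_Icc] at ht hti
      rw [max_eq_right (by omega : (i : ℤ) - t ≤ 0)]
      simp
  simp_rw [cinv_eq_sub_max hn, ← hmax, mul_sum, ← sum_sub_distrib]
  exact sum_congr rfl fun t _ => by ring

theorem natCast_dvd_sub_sub_two_mul_sum {n k L r : ℕ} {m : ℕ → ℕ}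
    (hm : k + ∑ t ∈ Icc 1 (n - 1), t * m t ≡ 0 [MOD n]) (hL : L ≡ 2 * k + r [MOD n]) :
    (n : ℤ) ∣ (L : ℤ) - r - 2 * ∑ t ∈ Icc 1 (n - 1), ((n : ℤ) - t) * m t := by
  have hkS : (n : ℤ) ∣ ((k + ∑ t ∈ Icc 1 (n - 1), t * m t : ℕ) : ℤ) :=
    Int.natCast_dvd_natCast.mpr (Nat.modEq_zero_iff_dvd.mp hm)
  have hLkr : (n : ℤ) ∣ ((2 * k + r : ℕ) : ℤ) - L := Nat.modEq_iff_dvd.mp hL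
  have hsplit : (L : ℤ) - r - 2 * ∑ t ∈ Icc 1 (n - 1), ((n : ℤ) - t) * m t
      = 2 * ((k + ∑ t ∈ Icc 1 (n - 1), t * m t : ℕ) : ℤ) - ((2 * k + r : ℕ) - L)
        - n * (2 * ∑ t ∈ Icc 1 (n - 1), (m t : ℤ)) := by
    simp only [sub_mul, sum_sub_distrib, ← mul_sum]
    push_cast
    ring
  rw [hsplit]
  exact ((hkS.mul_left 2).sub hLkr).sub (dvd_mul_right _ _)

theorem floor_intCast_add_div_natCast {n : ℕ} {D e : ℤ} (hD : (n : ℤ) ∣ D) (he : 0 ≤ e)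
    (hen : e < n) : ((⌊((D + e : ℤ) : ℚ) / n⌋ : ℤ) : ℚ) = (D : ℚ) / n := by
  obtain ⟨y, rfl⟩ := hD
  have hn : (n : ℤ) ≠ 0 := by omega
  rw [Rat.floor_intCast_div_natCast, Int.mul_add_ediv_left _ _ hn, Int.ediv_eq_zero_of_lt he hen,
    add_zero, Int.cast_mul, Int.cast_natCast, mul_div_cancel_left₀ _ (by exact_mod_cast hn)]

theorem ell_formula_general_r_general (n : ℕ) (k : ℕ)
    (m : ℕ → ℕ) (hm : k + ∑ t ∈ Finset.Icc 1 (n - 1), t * m t ≡ 0 [MOD n])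
    (r : ℕ) (hr2 : r ≤ n)
    (L : ℕ) (hL : L ≡ 2 * k + r [MOD n])
    (i : ℕ) (hi1 : 1 ≤ i) (hi2 : i ≤ n - 1) :
    2 * (∑ j ∈ Finset.Icc 1 (i - 1), (j : ℚ) * (m (i - j) : ℚ))
      - ((max ((i : ℤ) - (r : ℤ)) 0 : ℤ) : ℚ)
      + (i : ℚ) * (⌊((L : ℚ) + (n : ℚ) - (i : ℚ) + ((max ((i : ℤ) - (r : ℤ)) 0 : ℤ) : ℚ)
          - 2 * ∑ j ∈ Finset.Icc 1 (n - 1), (j : ℚ) * (m (n - j) : ℚ)) / (n : ℚ)⌋ : ℤ)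
    = (L : ℚ) * cinv n i (n - 1) + (if r = n then 0 else cinv n i r)
      - 2 * ∑ t ∈ Finset.Icc 1 (n - 1), cinv n i t * (m t : ℚ) := by
  have hn : 0 < n := by omega
  have hin : i ≤ n := by omega
  set B : ℤ := ∑ t ∈ Icc 1 (n - 1), ((n : ℤ) - t) * m t with hB
  have hD : (n : ℤ) ∣ L - r - 2 * B + n := (natCast_dvd_sub_sub_two_mul_sum hm hL).add dvd_rfl
  have hnum : (L : ℚ) + n - i + ((max ((i : ℤ) - r) 0 : ℤ) : ℚ)
      - 2 * ∑ j ∈ Icc 1 (n - 1), (j : ℚ) * (m (n - j) : ℚ)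
      = ((L - r - 2 * B + n + max ((r : ℤ) - i) 0 : ℤ) : ℚ) := by
    rw [sum_Icc_natCast_mul_sub_reflect n fun t => (m t : ℚ), hB,
      show max ((i : ℤ) - r) 0 = max ((r : ℤ) - i) 0 + i - r by omega]
    push_cast
    ring
  have hr : (if r = n then 0 else cinv n i r) = cinv n i r :=
    ite_eq_right_iff.mpr fun h => h ▸ (cinv_self hin).symm
  rw [hnum, floor_intCast_add_div_natCast hD (le_max_right _ _) (by omega), hr,
    sum_Icc_natCast_mul_sub_reflect i fun t => (m t : ℚ), cinv_pred_right hi2, cinv_eq_sub_max hn,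
    sum_cinv_mul hn hin, hB]
  push_cast
  field_simp
  ring

/-- Let `n ≥ 2`, `0 ≤ k ≤ n-1`, `m ∈ (ℤ_{≥0})^{n-1}` with
`k + Σ_{t=1}^{n-1} t m_t ≡ 0 (mod n)`, let `0 < r ≤ n`, and let `L ≥ 0` with
`L - 2k ≡ r (mod n)` (stated as `L ≡ 2k + r (mod n)`). Then for every `1 ≤ i ≤ n-1`:
`2 Σ_{j=1}^{i-1} j m_{i-j} - max(i-r,0)
   + i ⌊(L + n - i + max(i-r,0) - 2 Σ_{j=1}^{n-1} j m_{n-j})/n⌋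
 = (C⁻¹ (L e_{n-1} + e_r - 2m))_i`,
with the convention `e_n := 0`.  In particular this quantity is an integer (the left-hand
side is manifestly an integer). -/
theorem ell_formula_general_r (n : ℕ) (hn : 2 ≤ n) (k : ℕ) (hk : k ≤ n - 1)
    (m : ℕ → ℕ) (hm : k + ∑ t ∈ Finset.Icc 1 (n - 1), t * m t ≡ 0 [MOD n])
    (r : ℕ) (hr1 : 0 < r) (hr2 : r ≤ n)
    (L : ℕ) (hL : L ≡ 2 * k + r [MOD n])
    (i : ℕ) (hi1 : 1 ≤ i) (hi2 : i ≤ n - 1) :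
    2 * (∑ j ∈ Finset.Icc 1 (i - 1), (j : ℚ) * (m (i - j) : ℚ))
      - ((max ((i : ℤ) - (r : ℤ)) 0 : ℤ) : ℚ)
      + (i : ℚ) * (⌊((L : ℚ) + (n : ℚ) - (i : ℚ) + ((max ((i : ℤ) - (r : ℤ)) 0 : ℤ) : ℚ)
          - 2 * ∑ j ∈ Finset.Icc 1 (n - 1), (j : ℚ) * (m (n - j) : ℚ)) / (n : ℚ)⌋ : ℤ)
    = (L : ℚ) * cinv n i (n - 1) + (if r = n then 0 else cinv n i r)
      - 2 * ∑ t ∈ Finset.Icc 1 (n - 1), cinv n i t * (m t : ℚ) :=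
  ell_formula_general_r_general n k m hm r hr2 L hL i hi1 hi2
end

section
/- Let n ≥ 2, 0 ≤ j ≤ n−1, 0 ≤ k ≤ n−1, L ≥ 0, and let p ∈ P_L(Λ_0+Λ_j,Λ_k) be a path with interpolating matrix M(p) and associated node count |G(p)|. Then |G(p)| = n·E(p) + k(j−k) if k ≤ j, and |G(p)| = n·E(p) + (k−j)(n−k) if k > j, where E(p) is the energy of p. -/
/-!
On representatives in `{0, …, n-1}`, the wall height `(μ_ℓ - μ_{ℓ-1} - 1) mod n` equals
`μ_ℓ - μ_{ℓ-1} - 1 + n θ(μ_{ℓ-1} - μ_ℓ)`. Subtracting the same identity for the ground state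
`μ̄` (which has no walls) and summing with weights `ℓ`, summation by parts gives
`|G(p)| = n E(p) - Σ_{ℓ<L} (μ_ℓ - μ̄_ℓ)`.

The remaining sum is computed by lifting the two residues of `λ_ℓ` to natural numbers `A, B`:
each step raises one of them by one, so the labels add up to increments of the potential
`sumMod n A + sumMod n B`, where `sumMod n x = Σ_{t<x} (t mod n)`. Since `sumMod` grows by
`sumMod n n` over each period and is triangular below `n`, at the endpoint only the residues
`j`, `k` and `j - k mod n` survive.
-/

/-- `θ(x) = 1` if `x ≥ 0` and `θ(x) = 0` if `x < 0`. -/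
def theta (x : ℤ) : ℤ := if 0 ≤ x then 1 else 0

/-- The set of paths in `P_L(Λ_i + Λ_j, Λ_k)`, encoded by their step-label sequences
`ι(p) = (μ_0, …, μ_L)`: a path is a sequence `(λ_0, …, λ_L)` of multisets of two residues
mod `n` with `λ_0 = {i,j}`, `λ_L = {k, i+j-k+L}`, in which `λ_{ℓ+1}` is obtained from
`λ_ℓ` by replacing the element `μ_ℓ` by `μ_ℓ + 1`; by convention `μ_ℓ = i+j-k+L` for
`ℓ ≥ L`. -/
def pathSet (n : ℕ) (L : ℕ) (i j k : ZMod n) : Set (ℕ → ZMod n) :=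
  { mu | (∀ ℓ : ℕ, L ≤ ℓ → mu ℓ = i + j - k + (L : ZMod n)) ∧
      ∃ lam : ℕ → Multiset (ZMod n),
        lam 0 = {i, j} ∧
        lam L = {k, i + j - k + (L : ZMod n)} ∧
        ∀ ℓ : ℕ, ℓ < L →
          mu ℓ ∈ lam ℓ ∧ lam (ℓ + 1) = (mu ℓ + 1) ::ₘ (lam ℓ).erase (mu ℓ) }

/-- The energy `E(p) = Σ_{ℓ=1}^L ℓ (θ(μ_{ℓ-1} - μ_ℓ) - θ(μ̄_{ℓ-1} - μ̄_ℓ))` of a path with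
step sequence `mu`, where each `μ_ℓ` is taken through its representative in `{0,…,n-1}`
and `μ̄_ℓ` is the representative of `i+j-k+ℓ (mod n)` (the ground-state path labels). -/
def energy (n : ℕ) (L : ℕ) (i j k : ZMod n) (mu : ℕ → ZMod n) : ℤ :=
  ∑ ℓ ∈ Finset.Icc 1 L, (ℓ : ℤ) *
    (theta ((mu (ℓ - 1)).val - (mu ℓ).val)
      - theta (((i + j - k + ((ℓ - 1 : ℕ) : ZMod n)).val : ℤ)
          - ((i + j - k + (ℓ : ZMod n)).val : ℤ)))

/-- The ascending list of positions `ℓ ∈ {1,…,L}` of the domain walls of the path: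
a domain wall of height `h` (`0 < h < n`) at `ℓ` means `μ_ℓ - μ_{ℓ-1} ≡ h + 1 (mod n)`. -/
def wallPositions (n L : ℕ) (mu : ℕ → ZMod n) : List ℕ :=
  (List.range (L + 1)).filter fun ℓ => decide (1 ≤ ℓ ∧ mu ℓ - mu (ℓ - 1) - 1 ≠ 0)

/-- Build the interpolating matrix from the wall positions. -/
def mkM (n : ℕ) (mu : ℕ → ZMod n) : List ℕ → ℕ → List (ℕ × ℕ)
  | [], _ => []
  | x :: xs, prev => (x - prev, (mu x - mu (x - 1) - 1).val) :: mkM n mu xs x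

/-- The interpolating matrix `M(p)` of a path with step sequence `mu`. -/
def Mmat (n L : ℕ) (mu : ℕ → ZMod n) : List (ℕ × ℕ) :=
  mkM n mu (wallPositions n L mu) 0

/-- The node count `|G| = Σ_{i=1}^N h_i (w_1 + ⋯ + w_i)` of an interpolating matrix. -/
def nodes (G : List (ℕ × ℕ)) : ℕ :=
  ∑ i ∈ Finset.Icc 1 G.length, (G.getD (i - 1) (0, 0)).2 *
    ∑ j ∈ Finset.Icc 1 i, (G.getD (j - 1) (0, 0)).1


open Finset

/-- Both sides are congruent mod `n` and lie in `[0, n)`; `θ` records whether the difference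
`y.val - x.val - 1` has to be wrapped around. -/
lemma ZMod.val_sub_sub_one {n : ℕ} [NeZero n] (x y : ZMod n) :
    ((y - x - 1).val : ℤ) = y.val - x.val - 1 + n * theta (x.val - y.val) := by
  have hx := x.val_lt
  have hy := y.val_lt
  have hcast :
      y - x - 1 = (((y.val : ℤ) - x.val - 1 + n * theta (x.val - y.val) : ℤ) : ZMod n) := by
    push_cast
    simp [ZMod.natCast_val]
  rw [hcast, ZMod.val_intCast, Int.emod_eq_of_lt] <;> unfold theta <;> split_ifs <;> omega

def sumMod (n x : ℕ) : ℕ := ∑ t ∈ range x, t % n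

section SumMod

variable {n : ℕ}

lemma sumMod_succ (x : ℕ) : sumMod n (x + 1) = sumMod n x + x % n := sum_range_succ _ x

lemma sumMod_add (x y : ℕ) : sumMod n (x + y) = sumMod n x + ∑ t ∈ range y, (x + t) % n :=
  sum_range_add _ x y

lemma sumMod_mul_add (m x : ℕ) : sumMod n (n * m + x) = m * sumMod n n + sumMod n x := by
  induction m with
  | zero => simp
  | succ m ih =>
    have hperiod : ∑ t ∈ range (n * m + x), (n + t) % n = sumMod n (n * m + x) :=
      sum_congr rfl fun t _ => Nat.add_mod_left n t
    rw [show n * (m + 1) + x = n + (n * m + x) by ring, sumMod_add, hperiod, ih]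
    ring

lemma two_mul_sumMod_add_self {x : ℕ} (hx : x ≤ n) : 2 * sumMod n x + x = x * x := by
  have hid : sumMod n x = ∑ t ∈ range x, t :=
    sum_congr rfl fun t ht => Nat.mod_eq_of_lt ((mem_range.mp ht).trans_le hx)
  have hgauss := sum_range_id_mul_two x
  rw [hid]
  rcases x with _ | x
  · simp
  · rw [Nat.add_sub_cancel] at hgauss
    linarith

end SumMod

/-- Writing `A = n q + k`, the lifted ground-state endpoint is `s + L = n (q + e) + B` with
`e ∈ {0, 1}`, so by periodicity only residues below `n` are left, where `sumMod` is triangular. -/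
lemma sumMod_endpoint {n j k s A B L : ℕ} (hj : j < n) (hk : k < n)
    (hs : s + k = if k ≤ j then j else j + n) (hAB : A + B = j + L) (hA : A % n = k) :
    (sumMod n (s + L) : ℤ) - sumMod n s - (sumMod n A + sumMod n B - sumMod n j)
      = if k ≤ j then (k : ℤ) * (j - k) else ((k : ℤ) - j) * (n - k) := by
  obtain ⟨q, rfl⟩ : ∃ q, A = n * q + k := ⟨A / n, by rw [← hA, Nat.div_add_mod]⟩
  have tn : 2 * (sumMod n n : ℤ) + n = n * n := by exact_mod_cast two_mul_sumMod_add_self le_rfl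
  have tj : 2 * (sumMod n j : ℤ) + j = j * j := by exact_mod_cast two_mul_sumMod_add_self hj.le
  have tk : 2 * (sumMod n k : ℤ) + k = k * k := by exact_mod_cast two_mul_sumMod_add_self hk.le
  have ts : 2 * (sumMod n s : ℤ) + s = s * s := by
    exact_mod_cast two_mul_sumMod_add_self (by split_ifs at hs <;> omega)
  split_ifs at hs ⊢ with hkj
  · have hsL : s + L = n * q + B := by omega
    rw [show (s : ℤ) = j - k by omega] at ts
    rw [hsL, sumMod_mul_add, sumMod_mul_add]
    push_cast
    linarith
  · have hsL : s + L = n * (q + 1) + B := by rw [Nat.mul_succ]; omega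
    rw [show (s : ℤ) = n + j - k by omega] at ts
    rw [hsL, sumMod_mul_add, sumMod_mul_add]
    push_cast
    linarith

lemma ZMod.val_natCast_sub_natCast_add {n j k : ℕ} (hj : j < n) (hk : k < n) :
    ((j : ZMod n) - k).val + k = if k ≤ j then j else j + n := by
  have : NeZero n := ⟨by omega⟩
  split_ifs with hkj
  · rw [← Nat.cast_sub hkj, ZMod.val_natCast, Nat.mod_eq_of_lt (by omega)]
    omega
  · have : (j : ZMod n) - k = ((n + j - k : ℕ) : ZMod n) := by
      rw [Nat.cast_sub (by omega), Nat.cast_add, ZMod.natCast_self, zero_add]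
    rw [this, ZMod.val_natCast, Nat.mod_eq_of_lt (by omega)]
    omega

lemma sumMod_add_sum_val_add_natCast {n : ℕ} [NeZero n] (c : ZMod n) (L : ℕ) :
    sumMod n c.val + ∑ ℓ ∈ range L, (c + ℓ).val = sumMod n (c.val + L) := by
  rw [sumMod_add]
  congr 1
  refine sum_congr rfl fun ℓ _ => ?_
  rw [ZMod.val_add, ZMod.val_natCast, Nat.add_mod_mod]

lemma exists_lift_of_steps {n L a b : ℕ} {mu : ℕ → ZMod n} {lam : ℕ → Multiset (ZMod n)}
    (h0 : lam 0 = {(a : ZMod n), (b : ZMod n)})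
    (hstep : ∀ ℓ < L, mu ℓ ∈ lam ℓ ∧ lam (ℓ + 1) = (mu ℓ + 1) ::ₘ (lam ℓ).erase (mu ℓ))
    {ℓ : ℕ} (hℓ : ℓ ≤ L) :
    ∃ A B : ℕ, A + B = a + b + ℓ ∧ lam ℓ = {(A : ZMod n), (B : ZMod n)} ∧
      sumMod n a + sumMod n b + ∑ t ∈ range ℓ, (mu t).val = sumMod n A + sumMod n B := by
  induction ℓ with
  | zero => exact ⟨a, b, rfl, h0, by simp⟩
  | succ ℓ ih =>
    obtain ⟨A, B, hAB, hlam, hsum⟩ := ih (by omega)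
    obtain ⟨hmem, hnext⟩ := hstep ℓ (by omega)
    rw [hlam] at hmem hnext
    wlog hA : mu ℓ = A generalizing A B
    · have hB : mu ℓ = B := by simpa [hA] using hmem
      have hswap := Multiset.pair_comm (A : ZMod n) B
      exact this B A (by omega) (hswap ▸ hlam) (by omega) (hswap ▸ hmem) (hswap ▸ hnext) hB
    refine ⟨A + 1, B, by omega, ?_, ?_⟩
    · simp [hnext, hA, Multiset.insert_eq_cons]
    · rw [sum_range_succ, hA, ZMod.val_natCast, sumMod_succ]
      omega

lemma exists_lift_of_mem_pathSet {n L a b k : ℕ} (hk : k < n) {mu : ℕ → ZMod n}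
    (hmu : mu ∈ pathSet n L a b k) :
    ∃ A B : ℕ, A + B = a + b + L ∧ A % n = k ∧
      sumMod n a + sumMod n b + ∑ ℓ ∈ range L, (mu ℓ).val = sumMod n A + sumMod n B := by
  obtain ⟨-, lam, hlam0, hlamL, hstep⟩ := hmu
  obtain ⟨A, B, hAB, hlamA, hsum⟩ := exists_lift_of_steps hlam0 hstep le_rfl
  have hkAB : (k : ZMod n) = A ∨ (k : ZMod n) = B := by
    have hmem : (k : ZMod n) ∈ lam L := by simp [hlamL]
    simpa [hlamA] using hmem
  wlog hA : (k : ZMod n) = A generalizing A B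
  · exact this B A (by omega) (Multiset.pair_comm (A : ZMod n) B ▸ hlamA) (by omega)
      hkAB.symm (hkAB.resolve_left hA)
  refine ⟨A, B, hAB, ?_, hsum⟩
  rw [← ZMod.val_natCast, ← hA, ZMod.val_natCast, Nat.mod_eq_of_lt hk]

lemma Finset.sum_Icc_one_eq_sum_range {M : Type*} [AddCommMonoid M] (f : ℕ → M) (m : ℕ) :
    ∑ i ∈ Icc 1 m, f i = ∑ i ∈ range m, f (i + 1) := by
  rw [← Ico_add_one_right_eq_Icc, sum_Ico_eq_sum_range, Nat.add_sub_cancel]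
  simp only [add_comm 1]

lemma nodes_eq_sum_range (G : List (ℕ × ℕ)) :
    nodes G = ∑ i ∈ range G.length,
      (G.getD i (0, 0)).2 * ∑ j ∈ range (i + 1), (G.getD j (0, 0)).1 := by
  simp only [nodes, sum_Icc_one_eq_sum_range, Nat.add_sub_cancel]

lemma nodes_cons (w h : ℕ) (G : List (ℕ × ℕ)) :
    nodes ((w, h) :: G) = h * w + w * (G.map Prod.snd).sum + nodes G := by
  have hsnd : (G.map Prod.snd).sum = ∑ i ∈ range G.length, (G.getD i (0, 0)).2 := by
    induction G with
    | nil => simp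
    | cons a G ih => simp [ih, sum_range_succ', add_comm]
  rw [nodes_eq_sum_range, nodes_eq_sum_range, List.length_cons, sum_range_succ']
  simp only [sum_range_succ' (fun j => (((w, h) :: G).getD j (0, 0)).1), List.getD_cons_succ,
    List.getD_cons_zero, sum_range_zero, zero_add, mul_add, sum_add_distrib, ← sum_mul, hsnd]
  ring

lemma sum_map_filter_range {M : Type*} [AddCommMonoid M] (p : ℕ → Bool) (f : ℕ → M)
    (hf : ∀ ℓ, p ℓ = false → f ℓ = 0) (m : ℕ) :
    (((List.range m).filter p).map f).sum = ∑ ℓ ∈ range m, f ℓ := by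
  induction m with
  | zero => simp
  | succ m ih =>
    rw [List.range_succ, List.filter_append, List.map_append, List.sum_append, ih,
      sum_range_succ]
    cases h : p m <;> simp [h, hf]

section Walls

variable {n : ℕ} (mu : ℕ → ZMod n)

lemma map_snd_mkM (xs : List ℕ) (prev : ℕ) :
    (mkM n mu xs prev).map Prod.snd = xs.map fun x => (mu x - mu (x - 1) - 1).val := by
  induction xs generalizing prev with
  | nil => rfl
  | cons x xs ih => simp [mkM, ih]

/-- The widths of `mkM` are successive differences, so their partial sums are `x - prev`. -/
lemma nodes_mkM_add {xs : List ℕ} {prev : ℕ} (hxs : (prev :: xs).Pairwise (· ≤ ·)) :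
    nodes (mkM n mu xs prev) + prev * (xs.map fun x => (mu x - mu (x - 1) - 1).val).sum
      = (xs.map fun x => (mu x - mu (x - 1) - 1).val * x).sum := by
  induction xs generalizing prev with
  | nil => simp [mkM, nodes]
  | cons x xs ih =>
    obtain ⟨hprev, hx⟩ := List.pairwise_cons.mp hxs
    have hle : prev ≤ x := hprev x List.mem_cons_self
    rw [mkM, nodes_cons, map_snd_mkM, List.map_cons, List.map_cons, List.sum_cons,
      List.sum_cons, ← ih hx]
    obtain ⟨d, rfl⟩ := Nat.exists_eq_add_of_le hle
    rw [Nat.add_sub_cancel_left]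
    ring

lemma nodes_Mmat (L : ℕ) :
    nodes (Mmat n L mu) = ∑ ℓ ∈ Icc 1 L, (mu ℓ - mu (ℓ - 1) - 1).val * ℓ := by
  have hsorted : (0 :: wallPositions n L mu).Pairwise (· ≤ ·) :=
    List.pairwise_cons.mpr ⟨fun _ _ => Nat.zero_le _, List.pairwise_le_range.filter _⟩
  have h := nodes_mkM_add mu hsorted
  rw [zero_mul, add_zero] at h
  rw [Mmat, h, wallPositions, sum_map_filter_range, sum_range_succ', sum_Icc_one_eq_sum_range]
  · simp
  · intro ℓ hℓ
    simp only [decide_eq_false_iff_not, not_and_or, not_le, ne_eq, not_not] at hℓ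
    rcases hℓ with h0 | hwall
    · simp [Nat.lt_one_iff.mp h0]
    · simp [hwall]

end Walls

lemma Finset.sum_Icc_one_mul_sub (d : ℕ → ℤ) (L : ℕ) :
    ∑ ℓ ∈ Icc 1 L, (ℓ : ℤ) * (d ℓ - d (ℓ - 1)) = L * d L - ∑ ℓ ∈ range L, d ℓ := by
  induction L with
  | zero => simp
  | succ L ih =>
    rw [sum_Icc_succ_top (by omega), ih, sum_range_succ, Nat.add_sub_cancel]
    push_cast
    ring

theorem nodes_Mmat_eq_energy_add {n : ℕ} [NeZero n] (L : ℕ) (i j k : ZMod n)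
    (mu : ℕ → ZMod n) :
    (nodes (Mmat n L mu) : ℤ) = n * energy n L i j k mu
      + (L * ((mu L).val - (i + j - k + (L : ZMod n)).val)
        - ∑ ℓ ∈ range L, (((mu ℓ).val : ℤ) - (i + j - k + (ℓ : ZMod n)).val)) := by
  rw [nodes_Mmat, energy, ← sum_Icc_one_mul_sub
    (fun ℓ => ((mu ℓ).val : ℤ) - (i + j - k + (ℓ : ZMod n)).val), mul_sum, ← sum_add_distrib]
  push_cast
  refine sum_congr rfl fun ℓ hℓ => ?_
  obtain ⟨m, rfl⟩ := Nat.exists_eq_add_of_le (mem_Icc.mp hℓ).1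
  rw [add_comm 1 m, Nat.add_sub_cancel]
  have hground : i + j - k + ((m + 1 : ℕ) : ZMod n) - (i + j - k + m) - 1 = 0 := by
    push_cast
    ring
  have hstep := ZMod.val_sub_sub_one (mu m) (mu (m + 1))
  have hstep₀ :=
    ZMod.val_sub_sub_one (i + j - k + (m : ZMod n)) (i + j - k + ((m + 1 : ℕ) : ZMod n))
  rw [hground, ZMod.val_zero, Nat.cast_zero] at hstep₀
  push_cast at hstep₀ ⊢
  linear_combination ((m : ℤ) + 1) * (hstep - hstep₀)

/-- Let `n ≥ 2`, `0 ≤ j ≤ n-1`, `0 ≤ k ≤ n-1`, `L ≥ 0`, and let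
`p ∈ P_L(Λ_0 + Λ_j, Λ_k)`.  Then `|G(p)| = n E(p) + k(j-k)` if `k ≤ j`, and
`|G(p)| = n E(p) + (k-j)(n-k)` if `k > j`. -/
theorem nodes_eq_energy (n : ℕ) (hn : 2 ≤ n) (j k : ℕ) (hj : j ≤ n - 1) (hk : k ≤ n - 1)
    (L : ℕ) (mu : ℕ → ZMod n)
    (hmu : mu ∈ pathSet n L 0 (j : ZMod n) (k : ZMod n)) :
    (nodes (Mmat n L mu) : ℤ)
      = (n : ℤ) * energy n L 0 (j : ZMod n) (k : ZMod n) mu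
        + (if k ≤ j then (k : ℤ) * ((j : ℤ) - k) else ((k : ℤ) - j) * ((n : ℤ) - k)) := by
  have : NeZero n := ⟨by omega⟩
  obtain ⟨A, B, hAB, hAk, hlift⟩ :=
    exists_lift_of_mem_pathSet (a := 0) (b := j) (by omega : k < n) (by rwa [Nat.cast_zero])
  set c : ZMod n := 0 + (j : ZMod n) - k
  have hc : c.val + k = if k ≤ j then j else j + n := by
    rw [show c = (j : ZMod n) - k by simp [c]]
    exact ZMod.val_natCast_sub_natCast_add (by omega) (by omega)
  have hendpoint := sumMod_endpoint (by omega) (by omega) hc (by omega : A + B = j + L) hAk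
  have hground := sumMod_add_sum_val_add_natCast c L
  rw [show sumMod n 0 = 0 from rfl, zero_add] at hlift
  rw [nodes_Mmat_eq_energy_add, hmu.1 L le_rfl, sub_self, mul_zero, zero_sub, sum_sub_distrib]
  zify at hlift hground
  linarith
end
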